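/- Let ρ : ℂ⁴ → ℝ be ρ(z) = |z₂|⁴ + |z₃|⁴ + |z₄|⁴ − Re z₁ and let γ : ℝ → ℂ⁴ be γ(θ) = (sin⁴θ + cos⁴θ + 1, 1, sin θ, cos θ). Then for every θ ∈ ℝ: ρ(γ(θ)) = 0 (so γ(θ) lies on ∂ω = {ρ = 0}), and ∂ρ(γ(θ))(γ′(θ)) = 0, i.e. γ is a complex-tangential curve in ∂ω. -/

import Mathlib

open Complex

/-- The (1,0)-differential `∂ρ(p)(ξ) = (1/2)(Dρ(p)(ξ) - i·Dρ(p)(iξ))`, where `Dρ(p)` is the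
real Fréchet derivative of `ρ` at `p`. -/
noncomputable def delForm {E : Type*} [NormedAddCommGroup E] [NormedSpace ℂ E]
    (ρ : E → ℝ) (p ξ : E) : ℂ :=
  (1 / 2 : ℂ) * (((fderiv ℝ ρ p ξ : ℝ) : ℂ)
    - Complex.I * ((fderiv ℝ ρ p (Complex.I • ξ) : ℝ) : ℂ))

/-- The Levi form `L_ρ(p)(ξ) = (1/4)(D²ρ(p)(ξ,ξ) + D²ρ(p)(iξ,iξ))`, where `D²ρ(p)` is the
second real Fréchet derivative of `ρ` at `p`. -/
noncomputable def leviForm {E : Type*} [NormedAddCommGroup E] [NormedSpace ℂ E]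
    (ρ : E → ℝ) (p ξ : E) : ℝ :=
  (1 / 4 : ℝ) * (iteratedFDeriv ℝ 2 ρ p ![ξ, ξ]
    + iteratedFDeriv ℝ 2 ρ p ![Complex.I • ξ, Complex.I • ξ])

/-- The curve `γ(θ) = (sin⁴θ + cos⁴θ + 1, 1, sin θ, cos θ)` lies on
`∂ω = {|z₂|⁴ + |z₃|⁴ + |z₄|⁴ - Re z₁ = 0}` and is complex-tangential there. -/
theorem stmt_4 (ρ : (Fin 4 → ℂ) → ℝ)
    (hρ : ∀ z : Fin 4 → ℂ,
      ρ z = (‖z 1‖) ^ 4 + (‖z 2‖) ^ 4 + (‖z 3‖) ^ 4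
              - (z 0).re)
    (γ : ℝ → Fin 4 → ℂ)
    (hγ : ∀ θ : ℝ, γ θ =
      ![((Real.sin θ ^ 4 + Real.cos θ ^ 4 + 1 : ℝ) : ℂ), 1,
        ((Real.sin θ : ℝ) : ℂ), ((Real.cos θ : ℝ) : ℂ)]) :
    ∀ θ : ℝ, ρ (γ θ) = 0 ∧
      delForm ρ (γ θ)
        ![((4 * Real.sin θ ^ 3 * Real.cos θ - 4 * Real.cos θ ^ 3 * Real.sin θ : ℝ) : ℂ), 0,
          ((Real.cos θ : ℝ) : ℂ), ((-Real.sin θ : ℝ) : ℂ)] = 0 := by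
  have habs : ∀ w : ℂ, ‖w‖ ^ 4
      = (w.re * w.re + w.im * w.im) * (w.re * w.re + w.im * w.im) := fun w => by
    rw [show (4:ℕ) = 2*2 from rfl, pow_mul, Complex.sq_norm, Complex.normSq_apply]; ring
  have hg : ρ = fun z : Fin 4 → ℂ =>
      ((z 1).re * (z 1).re + (z 1).im * (z 1).im) * ((z 1).re * (z 1).re + (z 1).im * (z 1).im)
        + ((z 2).re * (z 2).re + (z 2).im * (z 2).im) * ((z 2).re * (z 2).re + (z 2).im * (z 2).im)
        + ((z 3).re * (z 3).re + (z 3).im * (z 3).im) * ((z 3).re * (z 3).re + (z 3).im * (z 3).im)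
        - (z 0).re := funext fun z => by
    rw [hρ, habs, habs, habs]
  intro θ
  set s := Real.sin θ
  set c := Real.cos θ
  set p := γ θ with hp
  have hpv : p = ![((s ^ 4 + c ^ 4 + 1 : ℝ) : ℂ), 1, ((s : ℝ) : ℂ), ((c : ℝ) : ℂ)] := hγ θ
  constructor
  · rw [hρ, hpv]
    simp only [Matrix.cons_val_zero, Matrix.cons_val_one, Matrix.head_cons,
      Matrix.cons_val_two, Matrix.tail_cons, Matrix.cons_val_three, habs,
      Complex.ofReal_re, Complex.ofReal_im, Complex.one_re, Complex.one_im]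
    ring
  · have hre : ∀ k : Fin 4, HasFDerivAt (fun z : Fin 4 → ℂ => (z k).re)
        (Complex.reCLM.comp (ContinuousLinearMap.proj (R := ℝ) (φ := fun _ : Fin 4 => ℂ) k)) p :=
      fun k => (Complex.reCLM.comp (ContinuousLinearMap.proj (R := ℝ) (φ := fun _ : Fin 4 => ℂ) k)).hasFDerivAt
    have him : ∀ k : Fin 4, HasFDerivAt (fun z : Fin 4 → ℂ => (z k).im)
        (Complex.imCLM.comp (ContinuousLinearMap.proj (R := ℝ) (φ := fun _ : Fin 4 => ℂ) k)) p :=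
      fun k => (Complex.imCLM.comp (ContinuousLinearMap.proj (R := ℝ) (φ := fun _ : Fin 4 => ℂ) k)).hasFDerivAt
    have hn : ∀ k : Fin 4, HasFDerivAt
        (fun z : Fin 4 → ℂ => (z k).re * (z k).re + (z k).im * (z k).im)
        (((p k).re • (Complex.reCLM.comp (ContinuousLinearMap.proj (R := ℝ) (φ := fun _ : Fin 4 => ℂ) k))
            + (p k).re • (Complex.reCLM.comp (ContinuousLinearMap.proj (R := ℝ) (φ := fun _ : Fin 4 => ℂ) k)))
          + ((p k).im • (Complex.imCLM.comp (ContinuousLinearMap.proj (R := ℝ) (φ := fun _ : Fin 4 => ℂ) k))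
            + (p k).im • (Complex.imCLM.comp (ContinuousLinearMap.proj (R := ℝ) (φ := fun _ : Fin 4 => ℂ) k)))) p :=
      fun k => ((hre k).mul (hre k)).add ((him k).mul (him k))
    have H := ((((hn 1).mul (hn 1)).add ((hn 2).mul (hn 2))).add ((hn 3).mul (hn 3))).sub (hre 0)
    simp only [Pi.add_def, Pi.mul_def, Pi.sub_def] at H
    rw [delForm, hg, H.fderiv]
    simp only [ContinuousLinearMap.sub_apply, ContinuousLinearMap.add_apply,
      ContinuousLinearMap.smul_apply, ContinuousLinearMap.coe_comp', Function.comp_apply,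
      ContinuousLinearMap.proj_apply, Complex.reCLM_apply, Complex.imCLM_apply,
      smul_eq_mul]
    rw [hpv]
    simp only [Matrix.cons_val_zero, Matrix.cons_val_one, Matrix.head_cons,
      Matrix.cons_val_two, Matrix.tail_cons, Matrix.cons_val_three,
      Pi.smul_apply, smul_eq_mul, Complex.ofReal_re, Complex.ofReal_im,
      Complex.one_re, Complex.one_im, Complex.mul_re, Complex.mul_im,
      Complex.I_re, Complex.I_im, Complex.ofReal_neg, Complex.neg_re, Complex.neg_im,
      Complex.zero_re, Complex.zero_im]
    push_cast
    ring
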